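/- Over the odd alphabet {a < b} with both a and b odd and a ≠ 1, there is no infinite smooth word that is also an infinite Lyndon word. -/
import Mathlib


/-- Strict lexicographic order on infinite words. -/
def InfLex {α : Type*} [LT α] (u v : ℕ → α) : Prop :=
  ∃ k, (∀ j < k, u j = v j) ∧ u k < v k

/-- An infinite word is an infinite Lyndon word if it is lexicographically smaller
than all of its proper suffixes. -/
def IsInfLyndon {α : Type*} [LT α] (w : ℕ → α) : Prop :=
  ∀ i, 0 < i → InfLex w (fun n => w (n + i))

/-- Partial sums of an infinite sequence of block lengths. -/
def psum (u : ℕ → ℕ) : ℕ → ℕ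
  | 0 => 0
  | k + 1 => psum u k + u k

/-- The index of the maximal block containing position `n` in the word whose block
lengths are given by `u`. -/
def blockIdx (u : ℕ → ℕ) (n : ℕ) : ℕ :=
  Nat.findGreatest (fun k => psum u k ≤ n) n

/-- `expand x y u` is the infinite word `x^{u 0} y^{u 1} x^{u 2} ⋯` whose run-length
encoding is `u` and whose letters alternate between `x` and `y`, starting with `x`;
i.e. the pseudo-inverse `Δ⁻¹_x(u)` over the alphabet `{x, y}`. -/
def expand (x y : ℕ) (u : ℕ → ℕ) (n : ℕ) : ℕ :=
  if blockIdx u n % 2 = 0 then x else y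

/-- `SmoothChain a b W` says that `W k` is the sequence of iterated run-length
encodings `Δᵏ(W 0)` over the alphabet `{a, b}`: each `W k` is a word over `{a, b}`
and is recovered from its run-length encoding `W (k+1)` by alternating expansion
starting with its own first letter. -/
def SmoothChain (a b : ℕ) (W : ℕ → ℕ → ℕ) : Prop :=
  ∀ k, (∀ n, W k n = a ∨ W k n = b) ∧
    W k = expand (W k 0) (if W k 0 = a then b else a) (W (k + 1))

/-- An infinite word `w` is smooth over `{a, b}` if all its iterated run-length
encodings `Δᵏ(w)` are infinite words over `{a, b}`. -/
def IsSmooth (a b : ℕ) (w : ℕ → ℕ) : Prop :=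
  ∃ W : ℕ → ℕ → ℕ, W 0 = w ∧ SmoothChain a b W

lemma psum_succ' (f : ℕ → ℕ) (k : ℕ) : psum f (k + 1) = psum f k + f k := rfl

lemma psum_zero' (f : ℕ → ℕ) : psum f 0 = 0 := rfl

lemma psum_one' (f : ℕ → ℕ) : psum f 1 = f 0 := Nat.zero_add _

lemma psum_le_psum' (f : ℕ → ℕ) {j k : ℕ} (h : j ≤ k) : psum f j ≤ psum f k := by
  obtain ⟨d, rfl⟩ := Nat.exists_eq_add_of_le h
  induction d with
  | zero => simp
  | succ d ih =>
    have : psum f (j + d + 1) = psum f (j + d) + f (j + d) := rfl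
    rw [show j + (d + 1) = j + d + 1 from rfl, this]
    omega

lemma le_psum' (f : ℕ → ℕ) (hf : ∀ i, 0 < f i) (k : ℕ) : k ≤ psum f k := by
  induction k with
  | zero => simp
  | succ k ih => rw [psum_succ' f k]; have := hf k; omega

lemma blockIdx_eq' (f : ℕ → ℕ) (hf : ∀ i, 0 < f i) {k n : ℕ}
    (h1 : psum f k ≤ n) (h2 : n < psum f (k + 1)) : blockIdx f n = k := by
  unfold blockIdx
  rw [Nat.findGreatest_eq_iff]
  refine ⟨le_trans (le_psum' f hf k) h1, fun _ => h1, fun m hm _ hle => ?_⟩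
  have : psum f (k + 1) ≤ psum f m := psum_le_psum' f hm
  omega

lemma expand_eq' (x y : ℕ) (f : ℕ → ℕ) (hf : ∀ i, 0 < f i) {k n : ℕ}
    (h1 : psum f k ≤ n) (h2 : n < psum f (k + 1)) :
    expand x y f n = if k % 2 = 0 then x else y := by
  unfold expand; rw [blockIdx_eq' f hf h1 h2]

lemma not_inflex' (w : ℕ → ℕ) (p d : ℕ)
    (h1 : ∀ j < d, w j = w (j + p)) (h2 : w (d + p) < w d) :
    ¬ InfLex w (fun n => w (n + p)) := by
  rintro ⟨k, hk, hlt⟩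
  simp only at hlt
  rcases lt_trichotomy k d with h | rfl | h
  · rw [h1 k h] at hlt; exact lt_irrefl _ hlt
  · omega
  · have := hk d h; simp only at this; omega

/-- Over an odd alphabet `{a < b}` with `a ≠ 1`, no infinite smooth word is an
infinite Lyndon word. -/
theorem no_smooth_lyndon_odd_alphabet (a b : ℕ) (ha : Odd a) (hb : Odd b)
    (hab : a < b) (ha1 : a ≠ 1) :
    ∀ w : ℕ → ℕ, IsSmooth a b w → ¬ IsInfLyndon w := by
  intro w hs hL
  obtain ⟨W, hW0, hc⟩ := hs
  subst hW0
  have ha3 : 3 ≤ a := by obtain ⟨k, rfl⟩ := ha; omega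
  have hb3 : 3 ≤ b := by omega
  have hw_ab := (hc 0).1
  have hu_ab := (hc 1).1
  have hv_ab := (hc 2).1
  have hw_exp : W 0 = expand (W 0 0) (if W 0 0 = a then b else a) (W 1) := (hc 0).2
  have hu_exp : W 1 = expand (W 1 0) (if W 1 0 = a then b else a) (W 2) := (hc 1).2
  have hupos : ∀ i, 0 < W 1 i := fun i => by rcases hu_ab i with h | h <;> omega
  have hvpos : ∀ i, 0 < W 2 i := fun i => by rcases hv_ab i with h | h <;> omega
  -- Step A: the first letter of w is a
  have hA : W 0 0 = a := by
    rcases hw_ab 0 with h | h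
    · exact h
    exfalso
    have hrw : W 0 = expand b a (W 1) := by rw [hw_exp, h, if_neg (by omega)]
    have hwp : W 0 (W 1 0) = a := by
      rw [hrw, expand_eq' b a (W 1) hupos (k := 1)
        (by rw [psum_one'])
        (by rw [psum_succ', psum_one']; have := hupos 1; omega)]
      norm_num
    refine not_inflex' (W 0) (W 1 0) 0 (fun j hj => absurd hj (Nat.not_lt_zero j)) ?_
      (hL (W 1 0) (hupos 0))
    rw [Nat.zero_add, hwp, h]; omega
  have hy : W 0 = expand a b (W 1) := by rw [hw_exp, hA, if_pos rfl]
  have hv0odd : W 2 0 % 2 = 1 := by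
    rcases hv_ab 0 with h | h <;> rw [h]
    · exact Nat.odd_iff.mp ha
    · exact Nat.odd_iff.mp hb
  rcases hu_ab 0 with hx | hx
  · -- Case u 0 = a : use the pair (b,b) inside the first b-run of u
    have hyu : W 1 = expand a b (W 2) := by rw [hu_exp, hx, if_pos rfl]
    set m := W 2 0 + 1 with hm
    have hmE : m % 2 = 0 := by omega
    have hum : W 1 m = b := by
      rw [hyu, expand_eq' a b (W 2) hvpos (k := 1)
        (by rw [psum_one']; omega)
        (by rw [psum_succ', psum_one']; rcases hv_ab 1 with h | h <;> omega)]
      norm_num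
    set p := psum (W 1) m with hp
    have hppos : 0 < p := by
      have h1 := le_psum' (W 1) hupos m
      omega
    have hwa : ∀ j, j < a → W 0 j = a := by
      intro j hj
      rw [hy, expand_eq' a b (W 1) hupos (k := 0)
        (by rw [psum_zero']; omega)
        (by rw [psum_succ', psum_zero']; omega)]
      norm_num
    have hwap : ∀ j, j < b → W 0 (j + p) = a := by
      intro j hj
      rw [hy, expand_eq' a b (W 1) hupos (k := m)
        (by rw [← hp]; omega)
        (by rw [psum_succ', ← hp, hum]; omega)]
      rw [if_pos hmE]
    have hwb : W 0 a = b := by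
      rw [hy, expand_eq' a b (W 1) hupos (k := 1)
        (by rw [psum_one']; omega)
        (by rw [psum_succ', psum_one']; have := hupos 1; omega)]
      norm_num
    refine not_inflex' (W 0) p a
      (fun j hj => (hwa j hj).trans (hwap j (lt_trans hj hab)).symm) ?_ (hL p hppos)
    rw [hwap a hab, hwb]; omega
  · -- Case u 0 = b : use the boundary b→a at the end of the first b-run of u
    have hyu : W 1 = expand b a (W 2) := by rw [hu_exp, hx, if_neg (by omega)]
    have hv03 : 3 ≤ W 2 0 := by rcases hv_ab 0 with h | h <;> omega
    set m := W 2 0 - 1 with hm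
    have hmE : m % 2 = 0 := by omega
    have huj : ∀ j, j < W 2 0 → W 1 j = b := by
      intro j hj
      rw [hyu, expand_eq' b a (W 2) hvpos (k := 0)
        (by rw [psum_zero']; omega)
        (by rw [psum_succ', psum_zero']; omega)]
      norm_num
    have hum : W 1 m = b := huj m (by omega)
    have h1' : W 1 1 = b := huj 1 (by omega)
    have hum1 : W 1 (m + 1) = a := by
      rw [hyu, expand_eq' b a (W 2) hvpos (k := 1)
        (by rw [psum_one']; omega)
        (by rw [psum_succ', psum_one']; have := hvpos 1; omega)]
      norm_num
    set p := psum (W 1) m with hp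
    have hppos : 0 < p := by
      have h1 := le_psum' (W 1) hupos m
      omega
    have hw_j : ∀ j < b + a, W 0 j = W 0 (j + p) := by
      intro j hj
      rcases lt_or_ge j b with hjb | hjb
      · have l1 : W 0 j = a := by
          rw [hy, expand_eq' a b (W 1) hupos (k := 0)
            (by rw [psum_zero']; omega)
            (by rw [psum_succ', psum_zero']; omega)]
          norm_num
        have l2 : W 0 (j + p) = a := by
          rw [hy, expand_eq' a b (W 1) hupos (k := m)
            (by rw [← hp]; omega)
            (by rw [psum_succ', ← hp, hum]; omega)]
          rw [if_pos hmE]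
        rw [l1, l2]
      · have l1 : W 0 j = b := by
          rw [hy, expand_eq' a b (W 1) hupos (k := 1)
            (by rw [psum_one']; omega)
            (by rw [psum_succ', psum_one']; omega)]
          norm_num
        have l2 : W 0 (j + p) = b := by
          rw [hy, expand_eq' a b (W 1) hupos (k := m + 1)
            (by rw [psum_succ', ← hp, hum]; omega)
            (by rw [psum_succ', psum_succ', ← hp, hum, hum1]; omega)]
          rw [if_neg (by omega)]
        rw [l1, l2]
    have hwd : W 0 (b + a) = b := by
      rw [hy, expand_eq' a b (W 1) hupos (k := 1)
        (by rw [psum_one']; omega)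
        (by rw [psum_succ', psum_one']; omega)]
      norm_num
    have hwdp : W 0 (b + a + p) = a := by
      rw [hy, expand_eq' a b (W 1) hupos (k := m + 1 + 1)
        (by rw [psum_succ', psum_succ', ← hp, hum, hum1]; omega)
        (by rw [psum_succ', psum_succ', psum_succ', ← hp, hum, hum1]
            have h0 : 0 < W 1 (m + 2) := hupos _
            omega)]
      rw [if_pos (by omega)]
    refine not_inflex' (W 0) p (b + a) hw_j ?_ (hL p hppos)
    rw [hwdp, hwd]; omega
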